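/- Let A ∈ B(H) be such that I − AA* is compact and, for every x ∈ H, ‖Aⁿx‖ → 0 and ‖A*ⁿx‖ → 0 as n → ∞. Then for every T ∈ B(H) the following are equivalent: (a) the set {A*ⁿTAⁿ : n ∈ ℕ} is relatively compact in the operator norm topology of B(H); (b) A*ⁿTAⁿ → 0 in operator norm; (c) T is a compact operator. -/

import Mathlib

/-!
By the uniform boundedness principle the powers of `A` and `A*` are bounded, so
`A*ⁿ T Aⁿ → 0` strongly for every `T`. Hence a norm cluster point of `A*ⁿ T Aⁿ` can only be `0`,
which gives (a) ⇒ (b). If `T` is compact, the bounded strongly null sequence `A*ⁿ` converges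
uniformly on the compact closure of the image of the unit ball under `T`, so `‖A*ⁿ T‖ → 0`,
giving (c) ⇒ (b). Conversely `1 - Aⁿ A*ⁿ` is compact for every `n`, so
`T - Aⁿ (A*ⁿ T Aⁿ) A*ⁿ` is compact, and under (b) these operators converge to `T` in norm.
-/

open ContinuousLinearMap Filter Topology

section Convergence

variable {𝕜 E F G ι : Type*} [NontriviallyNormedField 𝕜]
  [NormedAddCommGroup E] [NormedSpace 𝕜 E] [NormedAddCommGroup F] [NormedSpace 𝕜 F]
  [NormedAddCommGroup G] [NormedSpace 𝕜 G] {l : Filter ι}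

theorem ContinuousLinearMap.exists_norm_le_of_tendsto_apply [CompleteSpace E]
    {S : ℕ → E →L[𝕜] F} {L : E → F} (hS : ∀ x, Tendsto (fun n => S n x) atTop (𝓝 (L x))) :
    ∃ C, ∀ n, ‖S n‖ ≤ C :=
  banach_steinhaus fun x =>
    let ⟨C, hC⟩ := (hS x).norm.bddAbove_range
    ⟨C, fun n => hC ⟨n, rfl⟩⟩

theorem ContinuousLinearMap.tendsto_apply_of_tendsto_zero {S : ι → E →L[𝕜] F}
    (hS : ∃ C, ∀ i, ‖S i‖ ≤ C) {u : ι → E} (hu : Tendsto u l (𝓝 0)) :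
    Tendsto (fun i => S i (u i)) l (𝓝 0) :=
  hu.op_zero_isBoundedUnder_le (isBoundedUnder_of hS) (fun x T => T x)
    fun x T => (T.le_opNorm x).trans_eq (mul_comm _ _)

/-- A norm-bounded family of operators is equicontinuous, so this is Ascoli's theorem. -/
theorem ContinuousLinearMap.tendstoUniformlyOn_of_tendsto_apply {S : ι → E →L[𝕜] F}
    (hS : ∃ C, ∀ i, ‖S i‖ ≤ C) {L : E →L[𝕜] F} (hSL : ∀ x, Tendsto (fun i => S i x) l (𝓝 (L x)))
    {s : Set E} (hs : IsCompact s) :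
    TendstoUniformlyOn (fun i => ⇑(S i)) L l s := by
  have : CompactSpace s := isCompact_iff_compactSpace.mp hs
  have hequi : Equicontinuous ((↑) ∘ S) := ((NormedSpace.equicontinuous_TFAE S).out 5 1).mp hS
  rw [tendstoUniformlyOn_iff_tendstoUniformly_comp_coe]
  refine UniformFun.tendsto_iff_tendstoUniformly.mp
    ((((equicontinuous_restrict_iff _).mpr (hequi.equicontinuousOn s)).tendsto_uniformFun_iff_pi
      _ _).mpr (tendsto_pi_nhds.mpr fun x => hSL x))

theorem ContinuousLinearMap.tendsto_comp_of_isCompactOperator [NormedAlgebra ℝ 𝕜]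
    {S : ι → E →L[𝕜] F} (hS : ∃ C, ∀ i, ‖S i‖ ≤ C)
    {L : E →L[𝕜] F} (hSL : ∀ x, Tendsto (fun i => S i x) l (𝓝 (L x)))
    {K : G →L[𝕜] E} (hK : IsCompactOperator K) :
    Tendsto (fun i => S i ∘L K) l (𝓝 (L ∘L K)) := by
  have hunif := Metric.tendstoUniformlyOn_iff.mp
    (tendstoUniformlyOn_of_tendsto_apply hS hSL (hK.isCompact_closure_image_closedBall 1))
  refine Metric.tendsto_nhds.mpr fun ε hε => ?_
  filter_upwards [hunif (ε / 2) (half_pos hε)] with i hi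
  rw [dist_eq_norm]
  refine (opNorm_le_of_unit_norm (half_pos hε).le fun x hx => ?_).trans_lt (half_lt_self hε)
  have := hi (K x) (subset_closure ⟨x, by simp [hx], rfl⟩)
  rw [dist_eq_norm'] at this
  exact this.le

theorem ContinuousLinearMap.tendsto_of_isCompact_closure_range {S : ι → E →L[𝕜] F}
    (hc : IsCompact (closure (Set.range S))) {L : E →L[𝕜] F}
    (hSL : ∀ x, Tendsto (fun i => S i x) l (𝓝 (L x))) :
    Tendsto S l (𝓝 L) :=
  hc.tendsto_nhds_of_unique_mapClusterPt (.of_forall fun i => subset_closure ⟨i, rfl⟩)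
    fun _ _ hL' => ext fun x => eq_of_nhds_neBot <|
      (ClusterPt.mono (hL'.continuousAt_comp (apply 𝕜 F x).continuous.continuousAt) (hSL x)).neBot

end Convergence

section CompactOperators

variable {𝕜 E : Type*} [NontriviallyNormedField 𝕜] [NormedAddCommGroup E] [NormedSpace 𝕜 E]

theorem IsCompactOperator.mul_right {K : E →L[𝕜] E} (hK : IsCompactOperator K) (T : E →L[𝕜] E) :
    IsCompactOperator ⇑(K * T) :=
  hK.comp_clm T

theorem IsCompactOperator.mul_left {K : E →L[𝕜] E} (hK : IsCompactOperator K) (T : E →L[𝕜] E) :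
    IsCompactOperator ⇑(T * K) :=
  hK.clm_comp T

theorem isCompactOperator_one_sub_pow_mul_pow {A B : E →L[𝕜] E}
    (hAB : IsCompactOperator ⇑(1 - A * B)) (n : ℕ) :
    IsCompactOperator ⇑(1 - A ^ n * B ^ n) := by
  induction n with
  | zero => simpa using isCompactOperator_zero
  | succ n ih =>
    have hsplit : 1 - A ^ (n + 1) * B ^ (n + 1) = (1 - A * B) + A * (1 - A ^ n * B ^ n) * B := by
      rw [pow_succ' A, pow_succ B]
      noncomm_ring
    rw [hsplit]
    exact hAB.add ((ih.mul_left A).mul_right B)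

theorem isCompactOperator_sub_mul_mul {P : E →L[𝕜] E} (hP : IsCompactOperator ⇑(1 - P))
    (T : E →L[𝕜] E) : IsCompactOperator ⇑(T - P * T * P) := by
  have hsplit : T - P * T * P = (1 - P) * T + P * T * (1 - P) := by noncomm_ring
  rw [hsplit]
  exact (hP.mul_right T).add (hP.mul_left (P * T))

end CompactOperators

section Powers

variable {𝕜 E : Type*} [NontriviallyNormedField 𝕜] [NormedAddCommGroup E] [NormedSpace 𝕜 E]

theorem isCompactOperator_of_tendsto_pow_mul_mul_pow [CompleteSpace E] {A B T : E →L[𝕜] E}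
    (hAB : IsCompactOperator ⇑(1 - A * B)) (hA : ∃ C, ∀ n, ‖A ^ n‖ ≤ C)
    (hB : ∃ C, ∀ n, ‖B ^ n‖ ≤ C) (hT : Tendsto (fun n => B ^ n * T * A ^ n) atTop (𝓝 0)) :
    IsCompactOperator ⇑T := by
  have hcompact (n : ℕ) : IsCompactOperator ⇑(T - A ^ n * (B ^ n * T * A ^ n) * B ^ n) := by
    simpa only [mul_assoc] using
      isCompactOperator_sub_mul_mul (isCompactOperator_one_sub_pow_mul_pow hAB n) T
  have hnull : Tendsto (fun n => A ^ n * (B ^ n * T * A ^ n) * B ^ n) atTop (𝓝 0) :=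
    (isBoundedUnder_le_mul_tendsto_zero (isBoundedUnder_of hA) hT).zero_mul_isBoundedUnder_le
      (isBoundedUnder_of hB)
  refine isCompactOperator_of_tendsto (l := atTop) ?_ (.of_forall hcompact)
  simpa using tendsto_const_nhds.sub hnull

theorem tendsto_pow_mul_mul_pow_of_isCompactOperator [NormedAlgebra ℝ 𝕜] {A B T : E →L[𝕜] E}
    (hA : ∃ C, ∀ n, ‖A ^ n‖ ≤ C) (hB : ∃ C, ∀ n, ‖B ^ n‖ ≤ C)
    (hBx : ∀ x, Tendsto (fun n => (B ^ n) x) atTop (𝓝 0)) (hT : IsCompactOperator ⇑T) :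
    Tendsto (fun n => B ^ n * T * A ^ n) atTop (𝓝 0) := by
  have hBT : Tendsto (fun n => B ^ n * T) atTop (𝓝 0) := by
    have := tendsto_comp_of_isCompactOperator hB (L := 0) hBx hT
    rwa [zero_comp] at this
  exact hBT.zero_mul_isBoundedUnder_le (isBoundedUnder_of hA)

end Powers

theorem stmt_5_general {H : Type*} [NormedAddCommGroup H] [InnerProductSpace ℂ H]
    [CompleteSpace H]
    (A T : H →L[ℂ] H)
    (hA : IsCompactOperator (⇑((1 : H →L[ℂ] H) - A * adjoint A)))
    (hAn : ∀ x : H, Tendsto (fun n : ℕ => ‖(A ^ n) x‖) atTop (𝓝 0))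
    (hAsn : ∀ x : H, Tendsto (fun n : ℕ => ‖((adjoint A) ^ n) x‖) atTop (𝓝 0)) :
    List.TFAE
      [IsCompact (closure (Set.range fun n : ℕ => (adjoint A) ^ n * T * A ^ n)),
       Tendsto (fun n : ℕ => (adjoint A) ^ n * T * A ^ n) atTop (𝓝 0),
       IsCompactOperator ⇑T] := by
  have hAx (x : H) : Tendsto (fun n => (A ^ n) x) atTop (𝓝 0) :=
    tendsto_zero_iff_norm_tendsto_zero.mpr (hAn x)
  have hA'x (x : H) : Tendsto (fun n => (adjoint A ^ n) x) atTop (𝓝 0) :=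
    tendsto_zero_iff_norm_tendsto_zero.mpr (hAsn x)
  have hAbdd := exists_norm_le_of_tendsto_apply hAx
  have hA'bdd := exists_norm_le_of_tendsto_apply hA'x
  have hstrong (x : H) : Tendsto (fun n => (adjoint A ^ n * T * A ^ n) x) atTop (𝓝 0) :=
    tendsto_apply_of_tendsto_zero hA'bdd ((T.continuous.tendsto' 0 0 (map_zero T)).comp (hAx x))
  tfae_have 1 → 2 := fun h => tendsto_of_isCompact_closure_range h hstrong
  tfae_have 2 → 1 := fun h => h.isCompact_insert_range.closure_of_subset (Set.subset_insert _ _)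
  tfae_have 2 → 3 := isCompactOperator_of_tendsto_pow_mul_mul_pow hA hAbdd hA'bdd
  tfae_have 3 → 2 := tendsto_pow_mul_mul_pow_of_isCompactOperator hAbdd hA'bdd hA'x
  tfae_finish

/-- **Proposition 2.6.** Let `A ∈ B(H)` with `I - AA*` compact, `‖Aⁿx‖ → 0` and
`‖A*ⁿx‖ → 0` for all `x ∈ H`. For `T ∈ B(H)` the following are equivalent:
(a) `{A*ⁿTAⁿ : n ∈ ℕ}` is relatively compact in the operator norm topology;
(b) `A*ⁿTAⁿ → 0` in operator norm; (c) `T` is compact. -/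
theorem stmt_5 {H : Type*} [NormedAddCommGroup H] [InnerProductSpace ℂ H]
    [CompleteSpace H] [TopologicalSpace.SeparableSpace H]
    (hinf : ¬ FiniteDimensional ℂ H)
    (A T : H →L[ℂ] H)
    (hA : IsCompactOperator (⇑((1 : H →L[ℂ] H) - A * adjoint A)))
    (hAn : ∀ x : H, Tendsto (fun n : ℕ => ‖(A ^ n) x‖) atTop (𝓝 0))
    (hAsn : ∀ x : H, Tendsto (fun n : ℕ => ‖((adjoint A) ^ n) x‖) atTop (𝓝 0)) :
    List.TFAE
      [IsCompact (closure (Set.range fun n : ℕ => (adjoint A) ^ n * T * A ^ n)),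
       Tendsto (fun n : ℕ => (adjoint A) ^ n * T * A ^ n) atTop (𝓝 0),
       IsCompactOperator ⇑T] :=
  stmt_5_general A T hA hAn hAsn
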